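/- arXiv:2301.03041 — 2 statements merged into one kernel-verified Lean document; each statement's English description precedes it below -/
import Mathlib

section
/- For the similarity loss L = −⟨q̃₁, z̃₂⟩ with q̃₁ = q₁/‖q₁‖ and z̃₂ fixed of unit norm, the squared norm of the gradient with respect to q₁ equals (1 − ⟨q̃₁, z̃₂⟩²)/‖q₁‖², and hence is at most 1/‖q₁‖². -/
/-!
The gradient of `q ↦ ⟪q / ‖q‖, z⟫` at `q` is `‖q‖⁻¹ • (z - ⟪q̂, z⟫ • q̂)` with `q̂ = q / ‖q‖`:
the component of `z` orthogonal to `q̂`, scaled by `‖q‖⁻¹`. By Pythagoras its squared norm is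
`(‖z‖² - ⟪q̂, z⟫²) / ‖q‖²`.
-/

open RealInnerProductSpace InnerProductSpace

section Gradient

variable {E : Type*} [NormedAddCommGroup E] [InnerProductSpace ℝ E]

theorem norm_sub_inner_smul_sq_of_norm_eq_one {u : E} (hu : ‖u‖ = 1) (z : E) :
    ‖z - ⟪u, z⟫ • u‖ ^ 2 = ‖z‖ ^ 2 - ⟪u, z⟫ ^ 2 := by
  rw [norm_sub_sq_real, inner_smul_right, norm_smul, hu, real_inner_comm, Real.norm_eq_abs,
    mul_one, sq_abs]
  ring

variable [CompleteSpace E] {f g : E → ℝ} {f' g' x : E}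

theorem HasGradientAt.neg (hf : HasGradientAt f f' x) :
    HasGradientAt (fun y => -f y) (-f') x := by
  rw [hasGradientAt_iff_hasFDerivAt, map_neg] at *
  exact hf.neg

theorem HasGradientAt.mul (hf : HasGradientAt f f' x) (hg : HasGradientAt g g' x) :
    HasGradientAt (fun y => f y * g y) (f x • g' + g x • f') x := by
  rw [hasGradientAt_iff_hasFDerivAt, map_add, map_smul, map_smul] at *
  exact hf.mul hg

theorem HasGradientAt.inv (hf : HasGradientAt f f' x) (hx : f x ≠ 0) :
    HasGradientAt (fun y => (f y)⁻¹) (-(f x ^ 2)⁻¹ • f') x := by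
  rw [hasGradientAt_iff_hasFDerivAt, map_smul] at *
  refine ((hasDerivAt_inv hx).comp_hasFDerivAt x hf).congr_fderiv ?_
  ext v
  simp

theorem hasGradientAt_inner_const (z x : E) : HasGradientAt (fun y => ⟪y, z⟫) z x := by
  rw [hasGradientAt_iff_hasFDerivAt]
  have h : (fun y => ⟪y, z⟫) = toDual ℝ E z := funext fun y => real_inner_comm z y
  rw [h]
  exact (toDual ℝ E z).hasFDerivAt

theorem hasGradientAt_norm (hx : x ≠ 0) : HasGradientAt (‖·‖) (‖x‖⁻¹ • x) x := by
  rw [hasGradientAt_iff_hasFDerivAt]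
  have h := (hasStrictFDerivAt_norm_sq x).hasFDerivAt.sqrt (by positivity)
  simp only [Real.sqrt_sq (norm_nonneg _)] at h
  refine h.congr_fderiv ?_
  ext v
  simp [field]

theorem hasGradientAt_inner_normalize (z : E) (hx : x ≠ 0) :
    HasGradientAt (fun y => ⟪‖y‖⁻¹ • y, z⟫)
      (‖x‖⁻¹ • (z - ⟪‖x‖⁻¹ • x, z⟫ • ‖x‖⁻¹ • x)) x := by
  have h := ((hasGradientAt_norm hx).inv (norm_ne_zero_iff.mpr hx)).mul
    (hasGradientAt_inner_const z x)
  simp only [real_inner_smul_left] at h ⊢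
  convert h using 1
  module

end Gradient

theorem stmt_5 {C : ℕ} (q₁ z₂ : EuclideanSpace ℝ (Fin C)) (hq : q₁ ≠ 0)
    (hz : ‖z₂‖ = 1) :
    ‖gradient (fun q : EuclideanSpace ℝ (Fin C) => -⟪‖q‖⁻¹ • q, z₂⟫) q₁‖ ^ 2
        = (1 / ‖q₁‖ ^ 2) * (1 - ⟪‖q₁‖⁻¹ • q₁, z₂⟫ ^ 2) ∧
      ‖gradient (fun q : EuclideanSpace ℝ (Fin C) => -⟪‖q‖⁻¹ • q, z₂⟫) q₁‖ ^ 2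
        ≤ 1 / ‖q₁‖ ^ 2 := by
  have hunit : ‖‖q₁‖⁻¹ • q₁‖ = 1 := norm_smul_inv_norm hq
  have hgrad := (hasGradientAt_inner_normalize z₂ hq).neg.gradient
  have hsq : ‖gradient (fun q : EuclideanSpace ℝ (Fin C) => -⟪‖q‖⁻¹ • q, z₂⟫) q₁‖ ^ 2
      = (1 / ‖q₁‖ ^ 2) * (1 - ⟪‖q₁‖⁻¹ • q₁, z₂⟫ ^ 2) := by
    rw [hgrad, norm_neg, norm_smul, mul_pow, norm_sub_inner_smul_sq_of_norm_eq_one hunit, hz,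
      norm_inv, norm_norm, one_pow, inv_pow, one_div]
  refine ⟨hsq, hsq ▸ mul_le_of_le_one_right (by positivity) (sub_le_self _ (sq_nonneg _))⟩
end

section
/- Softmax temperature monotonicity of norm: for a vector x ∈ R^C and temperatures 0 < τ ≤ τ', the Euclidean norm of the softmax at temperature τ is at least that at temperature τ'; i.e., decreasing the temperature sharpens the distribution, increasing ‖P(x,τ)‖. -/
open scoped BigOperators

noncomputable def softmax9 {C : ℕ} (τ : ℝ) (x : EuclideanSpace ℝ (Fin C)) :
    EuclideanSpace ℝ (Fin C) :=
  WithLp.toLp 2 (fun i => Real.exp (x i / τ) / ∑ j, Real.exp (x j / τ))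

/-!
Write `exp (x i / τ) = b i * c i` with `b i = exp (x i / τ')` and `c i = exp (x i * (τ⁻¹ - τ'⁻¹))`.
Both factors are increasing functions of `x i`, so `b` and `c` monovary, and the claim becomes
`∑ b² / (∑ b)² ≤ ∑ (b c)² / (∑ b c)²`. This follows by combining the Chebyshev sum inequality
with weights `b`, `(∑ b²) (∑ b c) ≤ (∑ b) (∑ b² c)`, and Cauchy–Schwarz,
`(∑ b² c)² ≤ (∑ b²) (∑ (b c)²)`.
-/

open Finset Real

theorem Monovary.weighted_sum_mul_sum_le {ι α : Type*} [Fintype ι] [CommRing α] [LinearOrder α]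
    [IsStrictOrderedRing α] {w f g : ι → α} (hw : 0 ≤ w) (hfg : Monovary f g) :
    (∑ i, w i * f i) * ∑ i, w i * g i ≤ (∑ i, w i) * ∑ i, w i * f i * g i := by
  have hdouble : 0 ≤ ∑ i, ∑ j, w i * w j * ((f j - f i) * (g j - g i)) :=
    sum_nonneg fun i _ ↦ sum_nonneg fun j _ ↦
      mul_nonneg (mul_nonneg (hw i) (hw j)) (hfg.sub_mul_sub_nonneg i j)
  have hexpand : ∑ i, ∑ j, w i * w j * ((f j - f i) * (g j - g i)) =
      2 * ((∑ i, w i) * ∑ i, w i * f i * g i - (∑ i, w i * f i) * ∑ i, w i * g i) := by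
    calc _ = ∑ i, ∑ j, (w i * (w j * f j * g j) + w j * (w i * f i * g i)
            - w i * f i * (w j * g j) - w j * f j * (w i * g i)) := by
          refine sum_congr rfl fun i _ ↦ sum_congr rfl fun j _ ↦ ?_
          ring
      _ = _ := by
          simp only [sum_add_distrib, sum_sub_distrib, ← mul_sum, ← sum_mul]
          ring
  linarith

theorem sum_sq_div_sq_sum_le_of_monovary {ι : Type*} [Fintype ι] {b c : ι → ℝ}
    (hb : ∀ i, 0 < b i) (hc : ∀ i, 0 < c i) (hbc : Monovary b c) :
    (∑ i, b i ^ 2) / (∑ i, b i) ^ 2 ≤ (∑ i, (b i * c i) ^ 2) / (∑ i, b i * c i) ^ 2 := by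
  rcases isEmpty_or_nonempty ι with hι | hι
  · simp
  have hb2 : 0 < ∑ i, b i ^ 2 := sum_pos (fun i _ ↦ pow_pos (hb i) 2) univ_nonempty
  have hb1 : 0 < ∑ i, b i := sum_pos (fun i _ ↦ hb i) univ_nonempty
  have hbc1 : 0 < ∑ i, b i * c i := sum_pos (fun i _ ↦ mul_pos (hb i) (hc i)) univ_nonempty
  have chebyshev : (∑ i, b i ^ 2) * ∑ i, b i * c i ≤ (∑ i, b i) * ∑ i, b i ^ 2 * c i := by
    simpa only [sq] using hbc.weighted_sum_mul_sum_le (fun i ↦ (hb i).le)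
  have cauchySchwarz : (∑ i, b i ^ 2 * c i) ^ 2 ≤ (∑ i, b i ^ 2) * ∑ i, (b i * c i) ^ 2 := by
    simpa only [← mul_assoc, ← sq] using sum_mul_sq_le_sq_mul_sq univ b (fun i ↦ b i * c i)
  rw [div_le_div_iff₀ (by positivity) (by positivity)]
  refine le_of_mul_le_mul_left ?_ hb2
  calc (∑ i, b i ^ 2) * ((∑ i, b i ^ 2) * (∑ i, b i * c i) ^ 2)
      = ((∑ i, b i ^ 2) * ∑ i, b i * c i) ^ 2 := by ring
    _ ≤ ((∑ i, b i) * ∑ i, b i ^ 2 * c i) ^ 2 := by gcongr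
    _ = (∑ i, b i ^ 2 * c i) ^ 2 * (∑ i, b i) ^ 2 := by ring
    _ ≤ (∑ i, b i ^ 2) * (∑ i, (b i * c i) ^ 2) * (∑ i, b i) ^ 2 := by gcongr
    _ = (∑ i, b i ^ 2) * ((∑ i, (b i * c i) ^ 2) * (∑ i, b i) ^ 2) := by ring

theorem norm_softmax9_sq {C : ℕ} (τ : ℝ) (x : EuclideanSpace ℝ (Fin C)) :
    ‖softmax9 τ x‖ ^ 2 = (∑ i, exp (x i / τ) ^ 2) / (∑ i, exp (x i / τ)) ^ 2 := by
  simp only [EuclideanSpace.norm_sq_eq, softmax9, Real.norm_eq_abs, sq_abs, div_pow, ← sum_div]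

theorem stmt_9 {C : ℕ} (x : EuclideanSpace ℝ (Fin C)) (τ τ' : ℝ)
    (hτ : 0 < τ) (hττ' : τ ≤ τ') :
    ‖softmax9 τ' x‖ ≤ ‖softmax9 τ x‖ := by
  set b : Fin C → ℝ := fun i ↦ exp (x i / τ')
  set c : Fin C → ℝ := fun i ↦ exp (x i * (τ⁻¹ - τ'⁻¹))
  have hexp_split : ∀ i, exp (x i / τ) = b i * c i := fun i ↦ by
    rw [← exp_add]; ring_nf
  have hb_mono : Monotone fun t ↦ exp (t / τ') := fun s t hst ↦
    exp_le_exp.2 (div_le_div_of_nonneg_right hst (hτ.trans_le hττ').le)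
  have hc_mono : Monotone fun t ↦ exp (t * (τ⁻¹ - τ'⁻¹)) := fun s t hst ↦
    exp_le_exp.2 (mul_le_mul_of_nonneg_right hst (sub_nonneg.2 (inv_anti₀ hτ hττ')))
  have hmonovary : Monovary b c :=
    (((monovary_self x).comp_monotone_left hb_mono).symm.comp_monotone_left hc_mono).symm
  rw [← sq_le_sq₀ (norm_nonneg _) (norm_nonneg _), norm_softmax9_sq, norm_softmax9_sq]
  simpa only [hexp_split] using
    sum_sq_div_sq_sum_le_of_monovary (fun i ↦ exp_pos _) (fun i ↦ exp_pos _) hmonovary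
end
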